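/- Let f: S⁺ₙ → S⁺ₙ be the principal square root map on symmetric positive definite n×n real matrices. There exists a constant C(n), depending only on n, such that for all symmetric positive definite matrices A, B, one has |A^{1/2} - B^{1/2}| ≤ C(n) · (λ_min(A)^{1/2} + λ_min(B)^{1/2})^{-1} · |A - B|, where λ_min denotes the smallest eigenvalue and |·| is the Frobenius (Euclidean) norm. -/

import Mathlib

/-!
Put `X = A^{1/2} - B^{1/2}`. Then `A^{1/2} X + X B^{1/2} = A - B`, and since
`A^{1/2} ≥ a • 1` and `B^{1/2} ≥ b • 1` with `a = λ_min(A)^{1/2}`, `b = λ_min(B)^{1/2}`,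
pairing this identity with `X` in the trace inner product gives
`(a + b) |X|² ≤ ⟨X, A - B⟩ ≤ |X| |A - B|`. Hence the bound holds with `C = 1`.
-/

open Matrix

/-- Frobenius (Euclidean) norm of a real matrix. -/
noncomputable def frobNorm {n : ℕ} (A : Matrix (Fin n) (Fin n) ℝ) : ℝ :=
  Real.sqrt (∑ i, ∑ j, (A i j) ^ 2)

open scoped ComplexOrder in
/-- The positive semidefinite square root of a positive semidefinite matrix, as defined in the
older Mathlib (`Matrix.PosSemidef.sqrt`, since removed). -/
noncomputable def Matrix.PosSemidef.sqrt {m : Type*} [Fintype m] [DecidableEq m] {𝕜 : Type*}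
    [RCLike 𝕜] {A : Matrix m m 𝕜} (hA : A.PosSemidef) : Matrix m m 𝕜 :=
  hA.1.eigenvectorUnitary.1 * diagonal ((↑) ∘ (√·) ∘ hA.1.eigenvalues) *
    (star hA.1.eigenvectorUnitary : Matrix m m 𝕜)

namespace Matrix

variable {m : Type*} [Fintype m] [DecidableEq m]

lemma posSemidef_conj_diagonal_sub_smul_one {U : Matrix m m ℝ} (hU : U ∈ unitaryGroup m ℝ)
    {f : m → ℝ} {c : ℝ} (hc : ∀ i, c ≤ f i) :
    (U * diagonal f * Uᴴ - c • 1).PosSemidef := by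
  have hUU : U * Uᴴ = 1 := by simpa [star_eq_conjTranspose] using mem_unitaryGroup_iff.mp hU
  have hdiag : U * diagonal f * Uᴴ - c • 1 = U * diagonal (fun i => f i - c) * Uᴴ := by
    rw [← diagonal_sub, smul_one_eq_diagonal, Matrix.mul_sub, Matrix.sub_mul,
      ← smul_one_eq_diagonal, Matrix.mul_smul, Matrix.smul_mul, Matrix.mul_one, hUU]
  rw [hdiag]
  exact (posSemidef_diagonal_iff.mpr fun i => sub_nonneg.mpr (hc i)).mul_mul_conjTranspose_same U

namespace PosSemidef

lemma sqrt_eq {A : Matrix m m ℝ} (hA : A.PosSemidef) :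
    hA.sqrt = (hA.1.eigenvectorUnitary : Matrix m m ℝ) *
      diagonal (fun i => √(hA.1.eigenvalues i)) * (hA.1.eigenvectorUnitary : Matrix m m ℝ)ᴴ :=
  rfl

lemma sqrt_mul_self {A : Matrix m m ℝ} (hA : A.PosSemidef) : hA.sqrt * hA.sqrt = A := by
  set U : Matrix m m ℝ := ↑hA.1.eigenvectorUnitary
  have hUU : Uᴴ * U = 1 := by
    simpa [star_eq_conjTranspose] using mem_unitaryGroup_iff'.mp hA.1.eigenvectorUnitary.2
  have hsq : diagonal (fun i => √(hA.1.eigenvalues i)) * diagonal (fun i => √(hA.1.eigenvalues i))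
      = diagonal hA.1.eigenvalues := by
    rw [diagonal_mul_diagonal]
    exact congrArg diagonal (funext fun i => Real.mul_self_sqrt (hA.eigenvalues_nonneg i))
  conv_rhs => rw [hA.1.spectral_theorem, Unitary.conjStarAlgAut_apply]
  calc hA.sqrt * hA.sqrt
      = U * (diagonal (fun i => √(hA.1.eigenvalues i)) * (Uᴴ * U) *
          diagonal (fun i => √(hA.1.eigenvalues i))) * Uᴴ := by
        simp only [sqrt_eq, Matrix.mul_assoc]; rfl
    _ = _ := by rw [hUU, Matrix.mul_one, hsq]; rfl

lemma sqrt_sub_smul_one {A : Matrix m m ℝ} (hA : A.PosSemidef) :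
    (hA.sqrt - √(⨅ i, hA.1.eigenvalues i) • 1).PosSemidef :=
  posSemidef_conj_diagonal_sub_smul_one hA.1.eigenvectorUnitary.2 fun i =>
    Real.sqrt_le_sqrt (ciInf_le (Set.finite_range _).bddBelow i)

end PosSemidef

lemma PosDef.iInf_eigenvalues_pos [Nonempty m] {A : Matrix m m ℝ} (hA : A.PosDef) :
    0 < ⨅ i, hA.isHermitian.eigenvalues i := by
  obtain ⟨i, hi⟩ := exists_eq_ciInf_of_finite (f := hA.isHermitian.eigenvalues)
  exact hi ▸ hA.eigenvalues_pos i

lemma PosSemidef.mul_trace_le_trace_conj {n : Type*} [Fintype n] {S : Matrix m m ℝ} {a : ℝ}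
    (hS : (S - a • 1).PosSemidef) (X : Matrix m n ℝ) :
    a * (Xᴴ * X).trace ≤ (Xᴴ * S * X).trace := by
  have := (hS.conjTranspose_mul_mul_same X).trace_nonneg
  rwa [Matrix.mul_sub, Matrix.sub_mul, Matrix.mul_smul, Matrix.smul_mul, Matrix.mul_one,
    trace_sub, trace_smul, smul_eq_mul, sub_nonneg] at this

lemma add_mul_trace_le_trace_mul_sub_mul_self {S T : Matrix m m ℝ} {a b : ℝ}
    (hS : (S - a • 1).PosSemidef) (hT : (T - b • 1).PosSemidef) :
    (a + b) * ((S - T)ᴴ * (S - T)).trace ≤ ((S - T)ᴴ * (S * S - T * T)).trace := by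
  have hsylvester : S * S - T * T = S * (S - T) + (S - T) * T := by
    simp only [Matrix.mul_sub, Matrix.sub_mul]; abel
  rw [hsylvester]
  generalize S - T = X
  have hSX := hS.mul_trace_le_trace_conj X
  have hXT := hT.mul_trace_le_trace_conj Xᴴ
  rw [conjTranspose_conjTranspose, trace_mul_comm X] at hXT
  rw [Matrix.mul_add, trace_add, ← Matrix.mul_assoc, trace_mul_comm Xᴴ (X * T)]
  linarith

end Matrix

lemma frobNorm_nonneg {n : ℕ} (X : Matrix (Fin n) (Fin n) ℝ) : 0 ≤ frobNorm X :=
  Real.sqrt_nonneg _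

lemma trace_conjTranspose_mul_self_eq_frobNorm_sq {n : ℕ} (X : Matrix (Fin n) (Fin n) ℝ) :
    (Xᴴ * X).trace = frobNorm X ^ 2 := by
  rw [frobNorm, Real.sq_sqrt (by positivity), trace, Finset.sum_comm]
  simp [mul_apply, sq]

lemma trace_conjTranspose_mul_le_frobNorm_mul {n : ℕ} (X D : Matrix (Fin n) (Fin n) ℝ) :
    (Xᴴ * D).trace ≤ frobNorm X * frobNorm D := by
  have := Real.sum_mul_le_sqrt_mul_sqrt Finset.univ (fun p : Fin n × Fin n => X p.1 p.2)
    (fun p => D p.1 p.2)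
  simp only [trace, diag, mul_apply]
  rw [Finset.sum_comm]
  simpa [frobNorm, mul_apply, Fintype.sum_prod_type] using this

/-- Perturbation bound for the principal square root on symmetric positive definite
matrices: there is a constant `C = C(n)` depending only on the dimension such that
`|A^{1/2} - B^{1/2}| ≤ C (λ_min(A)^{1/2} + λ_min(B)^{1/2})⁻¹ |A - B|`. -/
theorem sqrt_perturbation_bound (n : ℕ) :
    ∃ C : ℝ, 0 < C ∧
      ∀ (A B : Matrix (Fin n) (Fin n) ℝ) (hA : A.PosDef) (hB : B.PosDef),
        frobNorm (hA.posSemidef.sqrt - hB.posSemidef.sqrt) ≤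
          C * (Real.sqrt (⨅ i, hA.isHermitian.eigenvalues i) +
               Real.sqrt (⨅ i, hB.isHermitian.eigenvalues i))⁻¹ * frobNorm (A - B) := by
  refine ⟨1, one_pos, fun A B hA hB => ?_⟩
  rcases isEmpty_or_nonempty (Fin n) with hn | hn
  · simp [frobNorm]
  set X := hA.posSemidef.sqrt - hB.posSemidef.sqrt
  set c := √(⨅ i, hA.isHermitian.eigenvalues i) + √(⨅ i, hB.isHermitian.eigenvalues i)
  have hc : 0 < c :=
    add_pos (Real.sqrt_pos.2 hA.iInf_eigenvalues_pos) (Real.sqrt_pos.2 hB.iInf_eigenvalues_pos)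
  have hnorm_sq : c * frobNorm X ^ 2 ≤ frobNorm X * frobNorm (A - B) := by
    rw [← trace_conjTranspose_mul_self_eq_frobNorm_sq]
    calc c * (Xᴴ * X).trace ≤ (Xᴴ * (A - B)).trace := by
          simpa only [PosSemidef.sqrt_mul_self] using add_mul_trace_le_trace_mul_sub_mul_self
            hA.posSemidef.sqrt_sub_smul_one hB.posSemidef.sqrt_sub_smul_one
      _ ≤ frobNorm X * frobNorm (A - B) := trace_conjTranspose_mul_le_frobNorm_mul X (A - B)
  obtain hX | hX := (frobNorm_nonneg X).eq_or_lt
  · rw [← hX]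
    exact mul_nonneg (by positivity) (frobNorm_nonneg _)
  · rw [one_mul, inv_mul_eq_div, le_div_iff₀ hc, mul_comm]
    exact le_of_mul_le_mul_left (by rwa [mul_left_comm, ← sq]) hX
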